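/- arXiv:1501.07365 — 4 statements merged into one kernel-verified Lean document; each statement's English description precedes it below -/
import Mathlib

section
/- For real constants a, b, c with a ≠ 0, the cubic dual-quaternion polynomial C = t³ - (k - ε(aj - bk))t² + (1 - ε(b + ai - ck))t - k + cε has norm polynomial C·C̄ = (t²+1)³, which is real; hence C is a motion polynomial. -/
open Polynomial DualNumber TrivSqZeroExt

noncomputable section

/-- Dual quaternions: dual numbers over the real quaternions. -/
abbrev DQ : Type := DualNumber (Quaternion ℝ)

/-- The quaternion unit i inside the dual quaternions. -/
def Di : DQ := inl ⟨0,1,0,0⟩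
/-- The quaternion unit j inside the dual quaternions. -/
def Dj : DQ := inl ⟨0,0,1,0⟩
/-- The quaternion unit k inside the dual quaternions. -/
def Dk : DQ := inl ⟨0,0,0,1⟩
/-- Embedding of real scalars into the dual quaternions. -/
def rr (x : ℝ) : DQ := algebraMap ℝ DQ x
/-- Dual quaternion conjugation: quaternion conjugation on primal and dual parts. -/
def qconj (h : DQ) : DQ := inl (star (fst h)) + inr (star (snd h))
/-- The Darboux motion polynomial
C = t³ - (k - ε(aj - bk))t² + (1 - ε(b + ai - ck))t - k + cε. -/
def darboux (a b c : ℝ) : Polynomial DQ :=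
  X ^ 3 - Polynomial.C (Dk - eps * (rr a * Dj - rr b * Dk)) * X ^ 2
    + Polynomial.C (1 - eps * (rr b + rr a * Di - rr c * Dk)) * X
    - Polynomial.C Dk + Polynomial.C (rr c * eps)

/-- Coefficientwise conjugate of a dual quaternion polynomial. -/
def pconj (P : Polynomial DQ) : Polynomial DQ :=
  P.sum fun n a => Polynomial.C (qconj a) * X ^ n

/-!
Writing `C = t³ + p t² + q t + r`, the product `C · C̄` is the monic sextic whose lower coefficients
are `p + p̄`, `q + p p̄ + q̄`, `r + p q̄ + q p̄ + r̄`, `p r̄ + q q̄ + r p̄`, `q r̄ + r q̄` and `r r̄` (the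
variable `t` is central, so only the order of the coefficients matters). Computing these in the
coordinates `1, i, j, k, ε, εi, εj, εk` gives `0, 3, 0, 3, 0, 1`, the coefficients of `(t² + 1)³`.
Since `C` is monic, its leading coefficient is a unit.
-/

open scoped Quaternion

namespace Polynomial

variable {R : Type*} [Ring R]

def monicCubic (p q r : R) : R[X] := X ^ 3 + C p * X ^ 2 + C q * X + C r

theorem monicCubic_mul_monicCubic (p q r p' q' r' : R) :
    monicCubic p q r * monicCubic p' q' r' =
      X ^ 6 + C (p + p') * X ^ 5 + C (q + p * p' + q') * X ^ 4
        + C (r + p * q' + q * p' + r') * X ^ 3 + C (p * r' + q * q' + r * p') * X ^ 2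
        + C (q * r' + r * q') * X + C (r * r') := by
  simp only [monicCubic, ← monomial_one_one_eq_X, monomial_pow, add_mul, mul_add,
    monomial_mul_monomial, map_add, ← monomial_zero_left]
  ext n
  simp only [coeff_add, coeff_monomial]
  rcases n with _|_|_|_|_|_|_|n <;> simp <;> abel

theorem monic_monicCubic [Nontrivial R] (p q r : R) : (monicCubic p q r).Monic := by
  unfold monicCubic; monicity!

end Polynomial

@[simp] lemma fst_qconj (h : DQ) : (qconj h).fst = star h.fst := by simp [qconj]
@[simp] lemma snd_qconj (h : DQ) : (qconj h).snd = star h.snd := by simp [qconj]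

lemma qconj_one : qconj 1 = 1 := by ext <;> simp

lemma qconj_add (x y : DQ) : qconj (x + y) = qconj x + qconj y := by ext <;> simp

lemma pconj_add (P Q : DQ[X]) : pconj (P + Q) = pconj P + pconj Q :=
  sum_add_index _ _ _ (fun _ => by simp [qconj]) fun _ _ _ => by rw [qconj_add, C_add, add_mul]

lemma pconj_C_mul_X_pow (x : DQ) (n : ℕ) : pconj (C x * X ^ n) = C (qconj x) * X ^ n := by
  rw [pconj, C_mul_X_pow_eq_monomial, sum_monomial_index]; simp [qconj]

lemma pconj_monicCubic (p q r : DQ) :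
    pconj (monicCubic p q r) = monicCubic (qconj p) (qconj q) (qconj r) := by
  have expand (p q r : DQ) :
      monicCubic p q r = C 1 * X ^ 3 + C p * X ^ 2 + C q * X ^ 1 + C r * X ^ 0 := by
    simp [monicCubic]
  simp only [expand, pconj_add, pconj_C_mul_X_pow, qconj_one]

-- The anonymous constructors in `Di`, `Dj`, `Dk` live in `ℍ[ℝ,-1,0,-1]`, not in `ℍ[ℝ]`, so `simp`
-- can only use them coordinatewise.
@[simp] lemma Di_coords :
    Di.fst.re = 0 ∧ Di.fst.imI = 1 ∧ Di.fst.imJ = 0 ∧ Di.fst.imK = 0 ∧ Di.snd = 0 :=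
  ⟨rfl, rfl, rfl, rfl, rfl⟩
@[simp] lemma Dj_coords :
    Dj.fst.re = 0 ∧ Dj.fst.imI = 0 ∧ Dj.fst.imJ = 1 ∧ Dj.fst.imK = 0 ∧ Dj.snd = 0 :=
  ⟨rfl, rfl, rfl, rfl, rfl⟩
@[simp] lemma Dk_coords :
    Dk.fst.re = 0 ∧ Dk.fst.imI = 0 ∧ Dk.fst.imJ = 0 ∧ Dk.fst.imK = 1 ∧ Dk.snd = 0 :=
  ⟨rfl, rfl, rfl, rfl, rfl⟩
@[simp] lemma fst_rr (x : ℝ) : (rr x).fst = x := rfl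
@[simp] lemma snd_rr (x : ℝ) : (rr x).snd = 0 := rfl
@[simp] lemma fst_three : (3 : DQ).fst = ((3 : ℝ) : ℍ[ℝ]) := rfl
@[simp] lemma snd_three : (3 : DQ).snd = 0 := rfl

def darbouxCoeff₂ (a b : ℝ) : DQ := -(Dk - eps * (rr a * Dj - rr b * Dk))
def darbouxCoeff₁ (a b c : ℝ) : DQ := 1 - eps * (rr b + rr a * Di - rr c * Dk)
def darbouxCoeff₀ (c : ℝ) : DQ := -Dk + rr c * eps

lemma darboux_eq_monicCubic (a b c : ℝ) :
    darboux a b c = monicCubic (darbouxCoeff₂ a b) (darbouxCoeff₁ a b c) (darbouxCoeff₀ c) := by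
  simp only [darboux, monicCubic, darbouxCoeff₂, darbouxCoeff₁, darbouxCoeff₀, C_neg, C_add,
    neg_mul]
  abel

set_option maxHeartbeats 400000 in
lemma darboux_norm_coeffs (a b c : ℝ) :
    let p := darbouxCoeff₂ a b; let q := darbouxCoeff₁ a b c; let r := darbouxCoeff₀ c
    p + qconj p = 0 ∧ q + p * qconj p + qconj q = 3 ∧
      r + p * qconj q + q * qconj p + qconj r = 0 ∧ p * qconj r + q * qconj q + r * qconj p = 3 ∧
      q * qconj r + r * qconj q = 0 ∧ r * qconj r = 1 := by
  intro p q r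
  refine ⟨?_, ?_, ?_, ?_, ?_, ?_⟩ <;> ext <;>
    simp [p, q, r, darbouxCoeff₂, darbouxCoeff₁, darbouxCoeff₀] <;> ring

theorem stmt8_general (a b c : ℝ) :
    darboux a b c * pconj (darboux a b c) = (X ^ 2 + 1) ^ 3 ∧
    IsUnit (darboux a b c).leadingCoeff := by
  rw [darboux_eq_monicCubic]
  refine ⟨?_, (monic_monicCubic (R := DQ) _ _ _).leadingCoeff ▸ isUnit_one⟩
  obtain ⟨h₅, h₄, h₃, h₂, h₁, h₀⟩ := darboux_norm_coeffs a b c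
  rw [pconj_monicCubic, monicCubic_mul_monicCubic, h₅, h₄, h₃, h₂, h₁, h₀]
  simp only [map_zero, zero_mul, add_zero, map_one, map_ofNat]
  noncomm_ring

/-- The Darboux motion polynomial has norm polynomial (t²+1)³, which is real;
together with the invertible leading coefficient it is a motion polynomial. -/
theorem stmt8 (a b c : ℝ) (ha : a ≠ 0) :
    darboux a b c * pconj (darboux a b c) = (X ^ 2 + 1) ^ 3 ∧
    IsUnit (darboux a b c).leadingCoeff :=
  stmt8_general a b c

end
end

section
/- If a dual quaternion q₃ satisfies C(q₃) = 0 (right evaluation) for the Darboux motion polynomial C = t³ - (k - ε(aj - bk))t² + (1 - ε(b + ai - ck))t - k + cε with a ≠ 0, and q₃ is of the form k + ε(vi + wj) with v, w ∈ ℝ, then the quotient Q defined by C = Q·(t - q₃) has primal part t² + 1. -/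
open Polynomial DualNumber TrivSqZeroExt

noncomputable section

/-!
Taking primal parts is a ring homomorphism `DQ → ℍ[ℝ]` that kills every `ε`-term, so it sends
the Darboux polynomial to `t³ - k t² + t - k = (t² + 1)(t - k)` and `C = Q·(t - q₃)` to
`Q₀·(t - k)`. Since `t - k` is monic, it cancels on the right.
-/

abbrev primal : DQ →+* Quaternion ℝ :=
  (TrivSqZeroExt.fstHom ℝ (Quaternion ℝ) (Quaternion ℝ)).toRingHom

lemma primal_apply (x : DQ) : primal x = fst x := rfl

lemma map_primal_darboux (a b c : ℝ) :
    (darboux a b c).map primal = (X ^ 2 + 1) * (X - C (fst Dk)) := by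
  simp only [darboux, Polynomial.map_add, Polynomial.map_sub, Polynomial.map_mul,
    Polynomial.map_pow, Polynomial.map_X, Polynomial.map_C, primal_apply, fst_sub, fst_mul,
    fst_eps, fst_one, zero_mul, mul_zero, sub_zero, C_0, C_1, one_mul, add_zero]
  rw [add_mul, one_mul, mul_sub, ← ((commute_X (C _)).pow_left 2).eq, ← pow_succ]
  abel

theorem stmt10_general (a b c v w : ℝ) (Q : Polynomial DQ)
    (hquot : darboux a b c =
      Q * (X - Polynomial.C (Dk + eps * (rr v * Di + rr w * Dj)))) :
    Q.map (TrivSqZeroExt.fstHom ℝ (Quaternion ℝ) (Quaternion ℝ)).toRingHom = X ^ 2 + 1 := by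
  have h := congrArg (Polynomial.map primal) hquot
  simp only [map_primal_darboux, Polynomial.map_mul, Polynomial.map_sub, Polynomial.map_X,
    Polynomial.map_C, primal_apply, fst_add, fst_mul, fst_eps, zero_mul, add_zero] at h
  exact ((monic_X_sub_C _).isRegular.right h).symm

/-- If q₃ = k + ε(vi + wj) is a right zero of the Darboux motion polynomial, the
quotient Q with C = Q·(t - q₃) has primal part t² + 1. -/
theorem stmt10 (a b c v w : ℝ) (ha : a ≠ 0) (Q : Polynomial DQ)
    (hzero : (darboux a b c).eval₂ (RingHom.id DQ) (Dk + eps * (rr v * Di + rr w * Dj)) = 0)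
    (hquot : darboux a b c =
      Q * (X - Polynomial.C (Dk + eps * (rr v * Di + rr w * Dj)))) :
    Q.map (TrivSqZeroExt.fstHom ℝ (Quaternion ℝ) (Quaternion ℝ)).toRingHom = X ^ 2 + 1 :=
  stmt10_general a b c v w Q hquot
end
end

section
/- Each of the three linear factors Q₁, Q₂, Q₃ in the factorization FI of the Darboux motion polynomial is a rotation polynomial, i.e., writing Qᵢ = t - hᵢ, the dual quaternion hᵢ = p + εd satisfies: the real part of p is 0, the vector part of p is nonzero, and the real inner product of the vector parts of p and d vanishes. -/
open Polynomial DualNumber TrivSqZeroExt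

noncomputable section

/-- The unit vector quaternion E of the factorization FI, as a dual quaternion. -/
def ED (a b c : ℝ) : DQ :=
  inl ⟨0, 2*a*c/(a^2+b^2+c^2), 2*a*b/(a^2+b^2+c^2), (a^2-b^2-c^2)/(a^2+b^2+c^2)⟩

/-- A dual quaternion h defines a rotation polynomial t - h: zero scalar primal
part, zero scalar dual part (Study condition h₄ = 0), nonzero primal vector part,
and vanishing inner product of primal and dual vector parts. -/
def IsRotDQ (h : DQ) : Prop :=
  (fst h).re = 0 ∧ (snd h).re = 0 ∧ fst h ≠ 0 ∧
    (fst h).imI * (snd h).imI + (fst h).imJ * (snd h).imJ + (fst h).imK * (snd h).imK = 0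

/-! Each factor is written as `inl p + inr d` with explicit primal part `p` and dual part `d`;
the primal part of the first two factors is `∓E`, which is a unit vector, and the vanishing of
`⟨E, d⟩` for the first factor is a polynomial identity once the denominators are cleared. -/

/-- The anonymous constructors in `Di`, `Dj`, `Dk`, `ED` elaborate at type `QuaternionAlgebra`,
where the `fst_inl`/`snd_inr` simp lemmas do not fire; `quat` builds the same literals at type
`Quaternion ℝ`. -/
def quat (r x y z : ℝ) : Quaternion ℝ := ⟨r, x, y, z⟩

@[simp] theorem quat_re (r x y z : ℝ) : (quat r x y z).re = r := rfl
@[simp] theorem quat_imI (r x y z : ℝ) : (quat r x y z).imI = x := rfl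
@[simp] theorem quat_imJ (r x y z : ℝ) : (quat r x y z).imJ = y := rfl
@[simp] theorem quat_imK (r x y z : ℝ) : (quat r x y z).imK = z := rfl

theorem Di_eq : Di = inl (quat 0 1 0 0) := rfl
theorem Dj_eq : Dj = inl (quat 0 0 1 0) := rfl
theorem Dk_eq : Dk = inl (quat 0 0 0 1) := rfl
theorem ED_eq (a b c : ℝ) : ED a b c = inl (quat 0 (2*a*c/(a^2+b^2+c^2)) (2*a*b/(a^2+b^2+c^2))
    ((a^2-b^2-c^2)/(a^2+b^2+c^2))) := rfl

theorem rr_mul_mul_eps (x : ℝ) (u : DQ) : rr x * u * eps = inr (x • fst u) := by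
  ext <;> simp [rr, TrivSqZeroExt.algebraMap_eq_inl', Algebra.smul_def]

theorem isRotDQ_inl_add_inr {p d : Quaternion ℝ} :
    IsRotDQ (inl p + inr d) ↔
      p.re = 0 ∧ d.re = 0 ∧ p ≠ 0 ∧ p.imI * d.imI + p.imJ * d.imJ + p.imK * d.imK = 0 := by
  simp [IsRotDQ]

theorem normSq_fst_ED {a b c : ℝ} (habc : a^2 + b^2 + c^2 ≠ 0) :
    Quaternion.normSq (fst (ED a b c)) = 1 := by
  rw [ED_eq, fst_inl, Quaternion.normSq_def']
  simp only [quat_re, quat_imI, quat_imJ, quat_imK]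
  field_simp
  ring

theorem fst_ED_ne_zero {a b c : ℝ} (habc : a^2 + b^2 + c^2 ≠ 0) : fst (ED a b c) ≠ 0 := by
  intro h
  simpa [h] using normSq_fst_ED habc

theorem fst_ED_dot_eq_zero {a b c : ℝ} (ha : a ≠ 0) :
    (fst (ED a b c)).imI * (b*c/a) + (fst (ED a b c)).imJ * (-((a^2+c^2-b^2)/(2*a)))
      + (fst (ED a b c)).imK * b = 0 := by
  have habc : a^2 + b^2 + c^2 ≠ 0 := by positivity
  simp only [ED_eq, fst_inl, quat_imI, quat_imJ, quat_imK]
  field_simp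
  ring

theorem neg_ED_sub_eq (a b c x y z : ℝ) :
    -(ED a b c - rr x * Di * eps + rr y * Dj * eps - rr z * Dk * eps) =
      inl (-fst (ED a b c)) + inr (quat 0 x (-y) z) := by
  rw [rr_mul_mul_eps, rr_mul_mul_eps, rr_mul_mul_eps, Di_eq, Dj_eq, Dk_eq]
  ext <;> simp [ED_eq]

theorem ED_eq_inl_add_inr (a b c : ℝ) : ED a b c = inl (fst (ED a b c)) + inr 0 := by
  ext <;> simp [ED_eq]

theorem Dk_sub_eq (x y : ℝ) :
    Dk - rr x * Di * eps - rr y * Dj * eps = inl (quat 0 0 0 1) + inr (quat 0 (-x) (-y) 0) := by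
  rw [rr_mul_mul_eps, rr_mul_mul_eps, Di_eq, Dj_eq, Dk_eq]
  ext <;> simp

/-- Each of the three linear factors of FI is a rotation polynomial. -/
theorem stmt14 (a b c : ℝ) (ha : a ≠ 0) :
    IsRotDQ (-(ED a b c - rr (b*c/a) * Di * eps
        + rr ((a^2+c^2-b^2)/(2*a)) * Dj * eps - rr b * Dk * eps)) ∧
    IsRotDQ (ED a b c) ∧
    IsRotDQ (Dk - rr (b*c/a) * Di * eps - rr ((a^2+b^2-c^2)/(2*a)) * Dj * eps) := by
  have hE : fst (ED a b c) ≠ 0 := fst_ED_ne_zero (by positivity)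
  refine ⟨?_, ?_, ?_⟩
  · rw [neg_ED_sub_eq, isRotDQ_inl_add_inr]
    refine ⟨by simp [ED_eq], rfl, neg_ne_zero.mpr hE, ?_⟩
    simp only [Quaternion.imI_neg, Quaternion.imJ_neg, Quaternion.imK_neg, quat_imI, quat_imJ,
      quat_imK]
    linear_combination -fst_ED_dot_eq_zero (b := b) (c := c) ha
  · rw [ED_eq_inl_add_inr, isRotDQ_inl_add_inr]
    refine ⟨rfl, rfl, hE, ?_⟩
    simp only [Quaternion.imI_zero, Quaternion.imJ_zero, Quaternion.imK_zero, mul_zero, add_zero]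
  · rw [Dk_sub_eq, isRotDQ_inl_add_inr]
    refine ⟨rfl, rfl, fun h => one_ne_zero (congrArg QuaternionAlgebra.imK h), by simp⟩
end
end

section
/- For reals a, b, c, let C₁ = t² + ε(aj - bk)t + 1 + cε·k and Q₄ = t - k. Then C₁·Q₄ = C, where C = t³ - (k - ε(aj - bk))t² + (1 - ε(b + ai - ck))t - k + cε. -/
open Polynomial DualNumber TrivSqZeroExt

noncomputable section

/-- The quadratic motion polynomial C₁ = t² + ε(aj - bk)t + 1 + cεk. -/
def C1 (a b c : ℝ) : Polynomial DQ :=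
  X ^ 2 + Polynomial.C (eps * (rr a * Dj - rr b * Dk)) * X
    + Polynomial.C (1 + rr c * eps * Dk)

/-! The product is expanded over an arbitrary ring, keeping the order of factors, so the claim
reduces to two identities between dual quaternion coefficients; these follow from `k² = -1`,
`jk = i` and the centrality of the real scalars. -/

theorem X_sq_add_C_mul_X_add_C_mul_X_sub_C {R : Type*} [Ring R] (e f q : R) :
    (X ^ 2 + C e * X + C f) * (X - C q)
      = X ^ 3 - C (q - e) * X ^ 2 + C (f - e * q) * X - C (f * q) := by
  simp only [add_mul, mul_sub, sub_mul, C_sub, C_mul, mul_assoc, X_mul_C, X_pow_mul_C]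
  noncomm_ring

theorem Dk_mul_Dk : Dk * Dk = -1 := by
  refine (inl_mul ..).symm.trans ?_
  rw [← inl_one, ← inl_neg]
  congr 1
  change (⟨0, 0, 0, 1⟩ : Quaternion ℝ) * ⟨0, 0, 0, 1⟩ = -1
  ext <;> simp

theorem Dj_mul_Dk : Dj * Dk = Di := by
  refine (inl_mul ..).symm.trans ?_
  congr 1
  change (⟨0, 0, 1, 0⟩ : Quaternion ℝ) * ⟨0, 0, 0, 1⟩ = ⟨0, 1, 0, 0⟩
  ext <;> simp

theorem commute_rr (x : ℝ) (h : DQ) : Commute (rr x) h := Algebra.commutes x h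

/-- C₁·(t - k) = C for the Darboux motion polynomial C. -/
theorem stmt15 (a b c : ℝ) :
    C1 a b c * (X - Polynomial.C Dk) = darboux a b c := by
  have linear_coeff : (1 + rr c * eps * Dk) - eps * (rr a * Dj - rr b * Dk) * Dk
      = 1 - eps * (rr b + rr a * Di - rr c * Dk) := by
    rw [(commute_rr c eps).eq]
    simp only [mul_sub, sub_mul, mul_add, mul_assoc, Dj_mul_Dk, Dk_mul_Dk]
    noncomm_ring
  have const_coeff : (1 + rr c * eps * Dk) * Dk = Dk - rr c * eps := by
    rw [add_mul, one_mul, mul_assoc, Dk_mul_Dk, mul_neg_one, sub_eq_add_neg]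
  rw [C1, darboux, X_sq_add_C_mul_X_add_C_mul_X_sub_C, linear_coeff, const_coeff,
    map_sub C Dk (rr c * eps), ← sub_add]
end
end
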